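/- For all matrices A, B ∈ M₂(ℂ) and all integers n ≥ 0: tr((AB − BA)^{2n}) = 2^{1−n}·(tr((AB − BA)²))^n, where 2^{1−n} is the complex number 2·(1/2)^n. -/
import Mathlib


lemma sq_of_traceless (C : Matrix (Fin 2) (Fin 2) ℂ) (h : C.trace = 0) :
    C ^ 2 = ((C ^ 2).trace / 2) • (1 : Matrix (Fin 2) (Fin 2) ℂ) := by
  have ht : C 0 0 + C 1 1 = 0 := by
    simpa [Matrix.trace, Matrix.diag, Fin.sum_univ_two] using h
  have hd : C 1 1 = -C 0 0 := by linear_combination ht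
  ext i j
  fin_cases i <;> fin_cases j <;>
    simp [pow_two, Matrix.mul_apply, Matrix.trace, Matrix.diag, Fin.sum_univ_two,
      Matrix.smul_apply, Matrix.one_apply, hd] <;> ring

/-!
STATEMENT 15: for all A, B ∈ M₂(ℂ) and all n ≥ 0,
tr((AB − BA)^{2n}) = 2^{1−n}·(tr((AB − BA)²))^n, where 2^{1−n} = 2·(1/2)^n.
-/
theorem stmt_15 (A B : Matrix (Fin 2) (Fin 2) ℂ) (n : ℕ) :
    Matrix.trace ((A * B - B * A) ^ (2 * n)) =
      2 * (1 / 2 : ℂ) ^ n * (Matrix.trace ((A * B - B * A) ^ 2)) ^ n := by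
  set C := A * B - B * A with hC
  have h0 : C.trace = 0 := by
    simp [hC, Matrix.trace_sub, Matrix.trace_mul_comm A B]
  have hsq := sq_of_traceless C h0
  have : C ^ (2 * n) = (((C ^ 2).trace / 2) ^ n) • (1 : Matrix (Fin 2) (Fin 2) ℂ) := by
    conv_lhs => rw [pow_mul, hsq, smul_pow, one_pow]
  rw [this, Matrix.trace_smul, Matrix.trace_one]
  simp [div_pow]
  ring
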